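/- arXiv:2403.07707 — 2 statements merged into one kernel-verified Lean document; each statement's English description precedes it below -/
import Mathlib

section
/- Let p be a polynomial of degree at most n that is monotone nondecreasing on [0,1]. Then there exists h with 0 < h < 1 such that the Bernstein coefficients β_0,...,β_n of the rescaled polynomial p_h(t) = p(h·t) (as a polynomial on [0,1]) satisfy β_0 ≤ β_j ≤ β_n for all j; consequently the minimum of p over [0,h] equals p(0) = β_0, which is the minimum of the Bernstein coefficients, and the maximum of p over [0,h] equals p(h) = β_n. -/
open Finset Filter Topology Set

theorem exists_h_tight_bernstein_bounds (n : ℕ) (α : ℕ → ℝ)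
    (p : ℝ → ℝ)
    (hp : ∀ t : ℝ, p t = ∑ k ∈ Finset.range (n + 1), α k * t ^ k)
    (hmono : MonotoneOn p (Set.Icc (0 : ℝ) 1)) :
    ∃ h : ℝ, 0 < h ∧ h < 1 ∧
      ∃ β : ℕ → ℝ,
        (∀ j, β j = ∑ k ∈ Finset.range (j + 1),
          (α k * h ^ k) * (j.choose k : ℝ) / (n.choose k : ℝ)) ∧
        (∀ j ≤ n, β 0 ≤ β j ∧ β j ≤ β n) ∧
        β 0 = p 0 ∧ β n = p h ∧
        (∀ t ∈ Set.Icc (0 : ℝ) h, β 0 ≤ p t ∧ p t ≤ β n) := by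
  classical
  set B : ℝ → ℕ → ℝ := fun h j => ∑ k ∈ Finset.range (j + 1),
      (α k * h ^ k) * (j.choose k : ℝ) / (n.choose k : ℝ) with hB
  have hB0 : ∀ h : ℝ, B h 0 = α 0 := by intro h; simp [hB]
  have hBn : ∀ h : ℝ, B h n = p h := by
    intro h
    rw [hp, hB]
    apply Finset.sum_congr rfl
    intro k hk
    have hk' : k ≤ n := Nat.lt_succ_iff.mp (Finset.mem_range.mp hk)
    have hne : (n.choose k : ℝ) ≠ 0 := Nat.cast_ne_zero.mpr (Nat.choose_pos hk').ne'
    rw [mul_div_assoc, div_self hne, mul_one]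
  have hp0 : p 0 = α 0 := by
    rw [hp]
    rw [Finset.sum_eq_single 0]
    · simp
    · intro k _ hk0
      simp [zero_pow hk0]
    · intro h; exact absurd (Finset.mem_range.mpr (by omega)) h
  have hBext : ∀ (h : ℝ) (j : ℕ), j ≤ n → B h j = ∑ k ∈ Finset.range (n + 1),
      (α k * h ^ k) * (j.choose k : ℝ) / (n.choose k : ℝ) := by
    intro h j hj
    rw [hB]
    apply Finset.sum_subset
    · exact Finset.range_subset_range.mpr (by omega)
    · intro k _ hk'
      have : j < k := by
        simp only [Finset.mem_range, not_lt] at hk'; omega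
      simp [Nat.choose_eq_zero_of_lt this]
  suffices H : ∃ h : ℝ, 0 < h ∧ h < 1 ∧ ∀ j ≤ n, B h 0 ≤ B h j ∧ B h j ≤ B h n by
    obtain ⟨h, h0, h1, hmid⟩ := H
    refine ⟨h, h0, h1, B h, fun j => by rw [hB], hmid, ?_, hBn h, ?_⟩
    · rw [hB0, hp0]
    · intro t ht
      obtain ⟨ht0, hth⟩ := ht
      have hmem : t ∈ Set.Icc (0:ℝ) 1 := ⟨ht0, hth.trans h1.le⟩
      have h0mem : (0:ℝ) ∈ Set.Icc (0:ℝ) 1 := ⟨le_refl 0, zero_le_one⟩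
      have hhmem : h ∈ Set.Icc (0:ℝ) 1 := ⟨h0.le, h1.le⟩
      rw [hB0, ← hp0, hBn]
      exact ⟨hmono h0mem hmem ht0, hmono hmem hhmem hth⟩
  by_cases hc : ∀ k, 1 ≤ k → k ≤ n → α k = 0
  · refine ⟨1/2, by norm_num, by norm_num, ?_⟩
    have hconst : ∀ j' ≤ n, B (1/2) j' = α 0 := by
      intro j' hj'
      simp only [hB]
      rw [Finset.sum_eq_single 0]
      · simp
      · intro k hk hk0
        have h1k : 1 ≤ k := Nat.one_le_iff_ne_zero.mpr hk0
        have hkn : k ≤ n := le_trans (Nat.lt_succ_iff.mp (Finset.mem_range.mp hk)) hj'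
        simp [hc k h1k hkn]
      · intro h; exact absurd (Finset.mem_range.mpr (by omega)) h
    intro j hj
    rw [hconst j hj, hconst 0 (Nat.zero_le n), hconst n le_rfl]
    exact ⟨le_rfl, le_rfl⟩
  · push_neg at hc
    obtain ⟨m, hm1, hmn, hmne⟩ := hc
    have hex : ∃ k, 1 ≤ k ∧ k ≤ n ∧ α k ≠ 0 := ⟨m, hm1, hmn, hmne⟩
    obtain ⟨hk01, hk0n, hk0ne⟩ := Nat.find_spec hex
    set k0 := Nat.find hex with hk0def
    have hmin : ∀ k, 1 ≤ k → k < k0 → α k = 0 := by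
      intro k h1 h2
      by_contra hne
      exact Nat.find_min hex h2 ⟨h1, by omega, hne⟩
    clear hk0def
    clear_value k0
    set F : (ℕ → ℝ) → ℝ → ℝ := fun w h => ∑ k ∈ Finset.range (n + 1),
      if k0 ≤ k then α k * h ^ (k - k0) * w k else 0 with hF
    have hFcont : ∀ w, Continuous (F w) := by
      intro w
      apply continuous_finset_sum
      intro k _
      by_cases hk : k0 ≤ k
      · simp only [if_pos hk]; fun_prop
      · simp only [if_neg hk]; exact continuous_const
    have hF0 : ∀ w, F w 0 = α k0 * w k0 := by
      intro w
      simp only [hF]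
      rw [Finset.sum_eq_single k0]
      · simp
      · intro k hk hne
        by_cases h : k0 ≤ k
        · have hpos : k - k0 ≠ 0 := by omega
          simp [h, zero_pow hpos]
        · simp [h]
      · intro h
        exact absurd (Finset.mem_range.mpr (by omega)) h
    have hfact : ∀ (w : ℕ → ℝ) (h : ℝ),
        (∑ k ∈ Finset.range (n + 1), if k0 ≤ k then α k * h ^ k * w k else 0)
          = h ^ k0 * F w h := by
      intro w h
      simp only [hF]
      rw [Finset.mul_sum]
      apply Finset.sum_congr rfl
      intro k _
      by_cases hk : k0 ≤ k
      · simp only [if_pos hk]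
        rw [show h ^ k = h ^ k0 * h ^ (k - k0) by rw [← pow_add]; congr 1; omega]
        ring
      · simp [if_neg hk]
    -- positivity of the leading coefficient
    have hα : 0 < α k0 := by
      have hq0 : F (fun _ => 1) 0 = α k0 := by rw [hF0]; ring
      have hpt : ∀ t : ℝ, p t - p 0 = t ^ k0 * F (fun _ => 1) t := by
        intro t
        rw [← hfact (fun _ => 1) t]
        have h1 : (∑ k ∈ Finset.range (n + 1), if k = 0 then α k * t ^ k else 0) = α 0 := by
          rw [Finset.sum_ite_eq' (Finset.range (n + 1)) 0 (fun k => α k * t ^ k)]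
          simp
        rw [show p t - p 0 = ∑ k ∈ Finset.range (n + 1),
            ((α k * t ^ k) - if k = 0 then α k * t ^ k else 0) by
          rw [Finset.sum_sub_distrib, h1, hp t, hp0]]
        apply Finset.sum_congr rfl
        intro k _
        rcases Nat.lt_or_ge k k0 with hlt | hge
        · rcases Nat.eq_zero_or_pos k with rfl | hkpos
          · have : ¬ k0 ≤ 0 := by omega
            simp [this]
          · have hz := hmin k hkpos hlt
            simp [hz, Nat.not_le.mpr hlt]
        · have hk0' : k ≠ 0 := by omega
          simp [hge, hk0']
      have hnonneg : ∀ᶠ t in 𝓝[>] (0:ℝ), 0 ≤ F (fun _ => 1) t := by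
        filter_upwards [Ioo_mem_nhdsGT_of_mem
          (show (0:ℝ) ∈ Set.Ico (0:ℝ) 1 from ⟨le_rfl, one_pos⟩)] with t ht
        have ht0 : 0 < t := ht.1
        have hmem : t ∈ Set.Icc (0:ℝ) 1 := ⟨ht0.le, ht.2.le⟩
        have hge : 0 ≤ p t - p 0 :=
          sub_nonneg.mpr (hmono ⟨le_rfl, zero_le_one⟩ hmem ht0.le)
        rw [hpt t] at hge
        exact nonneg_of_mul_nonneg_right hge (pow_pos ht0 k0)
      have hlim : Filter.Tendsto (F (fun _ => 1)) (𝓝[>] (0:ℝ)) (𝓝 (F (fun _ => 1) 0)) :=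
        ((hFcont (fun _ => 1)).tendsto 0).mono_left nhdsWithin_le_nhds
      have := ge_of_tendsto hlim hnonneg
      rw [hq0] at this
      exact lt_of_le_of_ne this (Ne.symm hk0ne)
    -- eventual nonnegativity machine
    have hev : ∀ (w : ℕ → ℝ), 0 < w k0 → ∀ᶠ h in 𝓝[>] (0:ℝ),
        0 ≤ ∑ k ∈ Finset.range (n + 1), if k0 ≤ k then α k * h ^ k * w k else 0 := by
      intro w hw
      have hpos : 0 < F w 0 := by rw [hF0]; exact mul_pos hα hw
      have h1 : ∀ᶠ h in 𝓝 (0:ℝ), 0 < F w h :=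
        ((hFcont w).tendsto 0).eventually_const_lt hpos
      filter_upwards [h1.filter_mono nhdsWithin_le_nhds, eventually_mem_nhdsWithin]
        with h hFh hh
      rw [hfact]
      exact le_of_lt (mul_pos (pow_pos hh k0) hFh)
    have hstep : ∀ j ∈ Finset.range (n + 1), ∀ᶠ h in 𝓝[>] (0:ℝ),
        B h 0 ≤ B h j ∧ B h j ≤ B h n := by
      intro j hj
      have hjn : j ≤ n := Nat.lt_succ_iff.mp (Finset.mem_range.mp hj)
      have hlow : ∀ᶠ h in 𝓝[>] (0:ℝ), B h 0 ≤ B h j := by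
        have hdiff : ∀ h : ℝ, B h j - B h 0 = ∑ k ∈ Finset.range (n + 1),
            if k0 ≤ k then α k * h ^ k * ((j.choose k : ℝ) / (n.choose k : ℝ)) else 0 := by
          intro h
          rw [hBext h j hjn, hBext h 0 (Nat.zero_le n), ← Finset.sum_sub_distrib]
          apply Finset.sum_congr rfl
          intro k hk
          rcases Nat.lt_or_ge k k0 with hlt | hge
          · rcases Nat.eq_zero_or_pos k with rfl | hkpos
            · have : ¬ k0 ≤ 0 := by omega
              simp [this]
            · have hz := hmin k hkpos hlt
              simp [hz, Nat.not_le.mpr hlt]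
          · have hkpos : (0:ℕ) < k := by omega
            rw [if_pos hge, Nat.choose_eq_zero_of_lt hkpos]
            push_cast
            ring
        rcases Nat.lt_or_ge j k0 with hjlt | hjge
        · apply Filter.Eventually.of_forall
          intro h
          have hz : B h j - B h 0 = 0 := by
            rw [hdiff h]
            apply Finset.sum_eq_zero
            intro k _
            by_cases hkk : k0 ≤ k
            · rw [if_pos hkk, Nat.choose_eq_zero_of_lt (by omega : j < k)]
              simp
            · rw [if_neg hkk]
          linarith
        · have hw : 0 < (j.choose k0 : ℝ) / (n.choose k0 : ℝ) := by
            apply div_pos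
            · exact_mod_cast Nat.choose_pos hjge
            · exact_mod_cast Nat.choose_pos hk0n
          filter_upwards [hev (fun k => (j.choose k : ℝ) / (n.choose k : ℝ)) hw] with h hh
          have hd := hdiff h
          linarith
      have hup : ∀ᶠ h in 𝓝[>] (0:ℝ), B h j ≤ B h n := by
        rcases eq_or_lt_of_le hjn with rfl | hjlt
        · exact Filter.Eventually.of_forall (fun h => le_rfl)
        · have hdiff : ∀ h : ℝ, B h n - B h j = ∑ k ∈ Finset.range (n + 1),
              if k0 ≤ k then α k * h ^ k * (1 - (j.choose k : ℝ) / (n.choose k : ℝ)) else 0 := by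
            intro h
            rw [hBext h n le_rfl, hBext h j hjn, ← Finset.sum_sub_distrib]
            apply Finset.sum_congr rfl
            intro k hk
            have hkn : k ≤ n := Nat.lt_succ_iff.mp (Finset.mem_range.mp hk)
            have hnck : (n.choose k : ℝ) ≠ 0 := Nat.cast_ne_zero.mpr (Nat.choose_pos hkn).ne'
            rcases Nat.lt_or_ge k k0 with hlt | hge
            · rcases Nat.eq_zero_or_pos k with rfl | hkpos
              · have : ¬ k0 ≤ 0 := by omega
                simp [this]
              · have hz := hmin k hkpos hlt
                simp [hz, Nat.not_le.mpr hlt]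
            · rw [if_pos hge]
              field_simp
          have hchoose : j.choose k0 < n.choose k0 := by
            rcases Nat.lt_or_ge j k0 with h1 | h2
            · rw [Nat.choose_eq_zero_of_lt h1]
              exact Nat.choose_pos hk0n
            · obtain ⟨s, rfl⟩ : ∃ s, k0 = s + 1 := ⟨k0 - 1, by omega⟩
              calc j.choose (s + 1) < (j + 1).choose (s + 1) := by
                    rw [Nat.choose_succ_succ]
                    have : 0 < j.choose s := Nat.choose_pos (by omega)
                    simp only [Nat.succ_eq_add_one]
                    omega
                _ ≤ n.choose (s + 1) := Nat.choose_le_choose _ (by omega)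
          have hw : 0 < 1 - (j.choose k0 : ℝ) / (n.choose k0 : ℝ) := by
            rw [sub_pos, div_lt_one (by exact_mod_cast Nat.choose_pos hk0n)]
            exact_mod_cast hchoose
          filter_upwards [hev (fun k => 1 - (j.choose k : ℝ) / (n.choose k : ℝ)) hw] with h hh
          have hd := hdiff h
          linarith
      exact hlow.and hup
    have hall : ∀ᶠ h in 𝓝[>] (0:ℝ),
        h < 1 ∧ ∀ j ∈ Finset.range (n + 1), B h 0 ≤ B h j ∧ B h j ≤ B h n := by
      refine Filter.Eventually.and ?_ ((Filter.eventually_all_finset _).mpr hstep)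
      exact (eventually_lt_nhds one_pos).filter_mono nhdsWithin_le_nhds
    obtain ⟨h, ⟨hh1, hmid⟩, hh0⟩ := (hall.and eventually_mem_nhdsWithin).exists
    exact ⟨h, hh0, hh1, fun j hj => hmid j (Finset.mem_range.mpr (by omega))⟩
end

section
/- Let p be a polynomial of degree at most n that is monotone on a compact interval [a,b] with a < b. Then there exists a finite partition a = s_0 < s_1 < ... < s_m = b such that on each sub-interval [s_{i-1}, s_i], the Bernstein coefficients of p restricted (and affinely rescaled) to that sub-interval have minimum equal to the minimum of p on the sub-interval and maximum equal to the maximum of p on the sub-interval. -/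
/-!
Write `p (t + h x) = ∑ₖ eₖ hᵏ xᵏ`. The Bernstein coefficients of this polynomial on `[0, 1]`
are `βⱼ = ∑ₖ eₖ hᵏ C(j,k) / C(n,k)`, so `β₀ = p t`, `βₙ = p (t + h)`, and for `j ≤ l` the
difference `βₗ - βⱼ` is a polynomial in `h` whose lowest-order term is a nonnegative multiple of
`eᵣ hʳ`, where `r ≥ 1` is the first index with `eᵣ ≠ 0`. Hence for all small `h > 0` every `βⱼ`
lies between `p t` and `p (t + h)`, and by reflection the same holds on `[t - h, t]`. A
Cousin-type argument (the supremum of the points reachable by a chain of such intervals is `b`)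
gives the partition; on each piece the monotone `p` takes its extreme values at the end points,
which are `β₀` and `βₙ`.
-/

open Finset Filter Topology Polynomial

lemma Nat.choose_lt_choose_of_lt {j l r : ℕ} (hjl : j < l) (hr : 0 < r) (hrl : r ≤ l) :
    j.choose r < l.choose r := by
  obtain ⟨l, rfl⟩ : ∃ l', l = l' + 1 := ⟨l - 1, by omega⟩
  obtain ⟨r, rfl⟩ : ∃ r', r = r' + 1 := ⟨r - 1, by omega⟩
  have := Nat.choose_pos (show r ≤ l by omega)
  have := Nat.choose_le_choose (r + 1) (show j ≤ l by omega)
  rw [Nat.choose_succ_succ']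
  omega

lemma Set.mem_uIcc_of_mul_sub_nonneg {s a b x : ℝ} (hs : s ≠ 0) (ha : 0 ≤ s * (x - a))
    (hb : 0 ≤ s * (b - x)) : x ∈ Set.uIcc a b := by
  rcases hs.lt_or_gt with hs | hs
  · exact Set.mem_uIcc.2 (Or.inr ⟨by nlinarith, by nlinarith⟩)
  · exact Set.mem_uIcc.2 (Or.inl ⟨by nlinarith, by nlinarith⟩)

lemma isLeast_isGreatest_image_Icc {α β : Type*} [LinearOrder α] [LinearOrder β] {f : α → β}
    {c d : α} (hcd : c ≤ d) (hf : MonotoneOn f (Set.Icc c d) ∨ AntitoneOn f (Set.Icc c d)) :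
    IsLeast (f '' Set.Icc c d) (f c ⊓ f d) ∧ IsGreatest (f '' Set.Icc c d) (f c ⊔ f d) := by
  have hc := Set.left_mem_Icc.2 hcd
  have hd := Set.right_mem_Icc.2 hcd
  rcases hf with hf | hf
  · have hfcd := hf hc hd hcd
    rw [inf_eq_left.2 hfcd, sup_eq_right.2 hfcd]
    exact ⟨hf.map_isLeast (isLeast_Icc hcd), hf.map_isGreatest (isGreatest_Icc hcd)⟩
  · have hfdc := hf hc hd hcd
    rw [inf_eq_right.2 hfdc, sup_eq_left.2 hfdc]
    exact ⟨hf.map_isGreatest (isGreatest_Icc hcd), hf.map_isLeast (isLeast_Icc hcd)⟩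

lemma eventually_pos_sum_mul_pow {c : ℕ → ℝ} {n r : ℕ} (hrn : r ≤ n) (hc : ∀ k < r, c k = 0)
    (hr : 0 < c r) : ∀ᶠ h in 𝓝[>] (0 : ℝ), 0 < ∑ k ∈ range (n + 1), c k * h ^ k := by
  set q : ℝ → ℝ := fun h => ∑ k ∈ range (n + 1), c k * h ^ (k - r)
  have hfactor : ∀ h : ℝ, ∑ k ∈ range (n + 1), c k * h ^ k = h ^ r * q h := fun h => by
    rw [mul_sum]
    refine sum_congr rfl fun k _ => ?_
    rcases lt_or_ge k r with hk | hk
    · simp [hc k hk]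
    · rw [mul_left_comm, pow_mul_pow_sub h hk]
  have hq0 : q 0 = c r := by
    simp only [q]
    rw [sum_eq_single_of_mem r (mem_range.2 (Nat.lt_succ_of_le hrn))]
    · simp
    · intro k _ hkr
      rcases hkr.lt_or_gt with hk | hk
      · simp [hc k hk]
      · simp [Nat.sub_ne_zero_of_lt hk]
  have hq : ∀ᶠ h in 𝓝 (0 : ℝ), 0 < q h :=
    ((by fun_prop : Continuous q).tendsto 0).eventually (lt_mem_nhds (hq0 ▸ hr))
  filter_upwards [nhdsWithin_le_nhds hq, self_mem_nhdsWithin] with h hqh hh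
  rw [hfactor]
  exact mul_pos (pow_pos hh r) hqh

noncomputable def bernsteinCoeff (n : ℕ) (e : ℕ → ℝ) (j : ℕ) : ℝ :=
  ∑ k ∈ range (n + 1), e k * ((j.choose k : ℝ) / n.choose k)

lemma bernsteinCoeff_zero (n : ℕ) (e : ℕ → ℝ) : bernsteinCoeff n e 0 = e 0 := by
  rw [bernsteinCoeff, sum_eq_single_of_mem 0 (mem_range.2 n.succ_pos)]
  · simp
  · intro k _ hk
    simp [Nat.choose_eq_zero_of_lt (Nat.pos_of_ne_zero hk)]

lemma bernsteinCoeff_self (n : ℕ) (e : ℕ → ℝ) :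
    bernsteinCoeff n e n = ∑ k ∈ range (n + 1), e k := by
  refine sum_congr rfl fun k hk => ?_
  have : (n.choose k : ℝ) ≠ 0 := by
    exact_mod_cast (Nat.choose_pos (Nat.lt_succ_iff.1 (mem_range.1 hk))).ne'
  rw [div_self this, mul_one]

lemma sum_choose_mul_eval_bernsteinPolynomial {n k : ℕ} (hk : k ≤ n) (τ : ℝ) :
    ∑ j ∈ range (n + 1), (j.choose k : ℝ) * (bernsteinPolynomial ℝ n j).eval τ =
      n.choose k * τ ^ k := by
  have hterm : ∀ i ∈ range (n - k + 1),
      ((k + i).choose k : ℝ) * (bernsteinPolynomial ℝ n (k + i)).eval τ =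
        n.choose k * τ ^ k * (τ ^ i * (1 - τ) ^ (n - k - i) * (n - k).choose i) := by
    intro i hi
    have hchoose :
        (n.choose (k + i) : ℝ) * (k + i).choose k = n.choose k * (n - k).choose i := by
      have := Nat.choose_mul (n := n) (Nat.le_add_right k i)
      rw [Nat.add_sub_cancel_left] at this
      exact_mod_cast this
    simp only [bernsteinPolynomial, eval_mul, eval_natCast, eval_pow, eval_X, eval_sub, eval_one]
    rw [Nat.sub_add_eq, pow_add]
    linear_combination (τ ^ k * τ ^ i * (1 - τ) ^ (n - k - i)) * hchoose
  rw [show n + 1 = k + (n - k + 1) by omega, sum_range_add,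
    sum_eq_zero fun j hj => by simp [Nat.choose_eq_zero_of_lt (mem_range.1 hj)], zero_add,
    sum_congr rfl hterm, ← mul_sum, ← add_pow, add_sub_cancel, one_pow, mul_one]

lemma sum_bernsteinCoeff_mul_eval (n : ℕ) (e : ℕ → ℝ) (τ : ℝ) :
    ∑ j ∈ range (n + 1), bernsteinCoeff n e j * (bernsteinPolynomial ℝ n j).eval τ =
      ∑ k ∈ range (n + 1), e k * τ ^ k := by
  simp_rw [bernsteinCoeff, sum_mul]
  rw [sum_comm]
  refine sum_congr rfl fun k hk => ?_
  have hkn := Nat.lt_succ_iff.1 (mem_range.1 hk)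
  have hpos : (n.choose k : ℝ) ≠ 0 := by exact_mod_cast (Nat.choose_pos hkn).ne'
  calc ∑ j ∈ range (n + 1), e k * ((j.choose k : ℝ) / n.choose k) *
        (bernsteinPolynomial ℝ n j).eval τ
      = e k / n.choose k *
          ∑ j ∈ range (n + 1), (j.choose k : ℝ) * (bernsteinPolynomial ℝ n j).eval τ := by
        rw [mul_sum]
        exact sum_congr rfl fun j _ => by ring
    _ = e k * τ ^ k := by
        rw [sum_choose_mul_eval_bernsteinPolynomial hkn]
        field_simp

lemma bernsteinCoeff_sub (n : ℕ) (e : ℕ → ℝ) (j l : ℕ) :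
    bernsteinCoeff n e l - bernsteinCoeff n e j =
      ∑ k ∈ range (n + 1), e k * (((l.choose k : ℝ) - j.choose k) / n.choose k) := by
  rw [bernsteinCoeff, bernsteinCoeff, ← sum_sub_distrib]
  exact sum_congr rfl fun k _ => by ring

lemma eventually_nonneg_mul_bernsteinCoeff_sub {n r : ℕ} {e : ℕ → ℝ} (hr : 0 < r)
    (hrn : r ≤ n) (he : ∀ k, 0 < k → k < r → e k = 0) (her : e r ≠ 0) {j l : ℕ} (hjl : j ≤ l) :
    ∀ᶠ h in 𝓝[>] (0 : ℝ), 0 ≤ e r * (bernsteinCoeff n (fun k => e k * h ^ k) l -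
      bernsteinCoeff n (fun k => e k * h ^ k) j) := by
  set d : ℕ → ℝ := fun k => e r * e k * (((l.choose k : ℝ) - j.choose k) / n.choose k)
  have hd : ∀ h : ℝ, e r * (bernsteinCoeff n (fun k => e k * h ^ k) l -
      bernsteinCoeff n (fun k => e k * h ^ k) j) = ∑ k ∈ range (n + 1), d k * h ^ k :=
    fun h => by
      rw [bernsteinCoeff_sub, mul_sum]
      exact sum_congr rfl fun k _ => by ring
  simp_rw [hd]
  have hd_low : ∀ k < r, d k = 0 := fun k hkr => by
    rcases Nat.eq_zero_or_pos k with rfl | hk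
    · simp [d]
    · simp [d, he k hk hkr]
  obtain rfl | hjl := hjl.eq_or_lt
  · simp [d]
  obtain hlr | hrl := lt_or_ge l r
  · have hd_zero : ∀ k, d k = 0 := fun k => (lt_or_ge k r).elim (hd_low k) fun hk => by
      simp [d, Nat.choose_eq_zero_of_lt (hlr.trans_le hk),
        Nat.choose_eq_zero_of_lt ((hjl.trans hlr).trans_le hk)]
    simp [hd_zero]
  have hdr : 0 < d r := by
    have hchoose : (j.choose r : ℝ) < l.choose r := by
      exact_mod_cast Nat.choose_lt_choose_of_lt hjl hr hrl
    have : (0 : ℝ) < n.choose r := by exact_mod_cast Nat.choose_pos hrn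
    exact mul_pos (mul_self_pos.2 her) (div_pos (sub_pos.2 hchoose) this)
  exact (eventually_pos_sum_mul_pow hrn hd_low hdr).mono fun h hh => hh.le

lemma eventually_bernsteinCoeff_mem_uIcc (n : ℕ) (e : ℕ → ℝ) :
    ∀ᶠ h in 𝓝[>] (0 : ℝ), ∀ j ≤ n, bernsteinCoeff n (fun k => e k * h ^ k) j ∈
      Set.uIcc (e 0) (∑ k ∈ range (n + 1), e k * h ^ k) := by
  by_cases hconst : ∀ k, 0 < k → k ≤ n → e k = 0
  · refine Eventually.of_forall fun h j _ => ?_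
    have : bernsteinCoeff n (fun k => e k * h ^ k) j = e 0 := by
      rw [bernsteinCoeff, sum_eq_single_of_mem 0 (mem_range.2 n.succ_pos)]
      · simp
      · intro k hk hk0
        simp [hconst k (Nat.pos_of_ne_zero hk0) (Nat.lt_succ_iff.1 (mem_range.1 hk))]
    rw [this]
    exact Set.left_mem_uIcc
  push Not at hconst
  set r := Nat.find hconst
  obtain ⟨hr, hrn, her⟩ : 0 < r ∧ r ≤ n ∧ e r ≠ 0 := Nat.find_spec hconst
  have hmin : ∀ k, 0 < k → k < r → e k = 0 := fun k hk hkr => by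
    by_contra hek
    exact Nat.find_min hconst hkr ⟨hk, by omega, hek⟩
  have hpairs : ∀ j ∈ Set.Iic n, ∀ᶠ h in 𝓝[>] (0 : ℝ),
      0 ≤ e r * (bernsteinCoeff n (fun k => e k * h ^ k) j -
        bernsteinCoeff n (fun k => e k * h ^ k) 0) ∧
      0 ≤ e r * (bernsteinCoeff n (fun k => e k * h ^ k) n -
        bernsteinCoeff n (fun k => e k * h ^ k) j) := fun j hj =>
    (eventually_nonneg_mul_bernsteinCoeff_sub hr hrn hmin her j.zero_le).and
      (eventually_nonneg_mul_bernsteinCoeff_sub hr hrn hmin her hj)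
  filter_upwards [(eventually_all_finite (Set.finite_Iic n)).2 hpairs] with h hh j hj
  have hend := bernsteinCoeff_zero n (fun k => e k * h ^ k)
  rw [pow_zero, mul_one] at hend
  rw [← hend, ← bernsteinCoeff_self]
  exact Set.mem_uIcc_of_mul_sub_nonneg her (hh j hj).1 (hh j hj).2

def HasBernsteinCoeffsBetween (n : ℕ) (p : ℝ → ℝ) (c d : ℝ) : Prop :=
  ∃ β : ℕ → ℝ, (∀ τ ∈ Set.Icc (0 : ℝ) 1,
      p (c + (d - c) * τ) = ∑ j ∈ range (n + 1), β j * (bernsteinPolynomial ℝ n j).eval τ) ∧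
    ∀ j ≤ n, β j ∈ Set.uIcc (p c) (p d)

lemma eventually_hasBernsteinCoeffsBetween_right {n : ℕ} {P : ℝ[X]} (hP : P.natDegree ≤ n)
    (t : ℝ) :
    ∀ᶠ h in 𝓝[>] (0 : ℝ), HasBernsteinCoeffsBetween n (fun x => P.eval x) t (t + h) := by
  set e := (taylor t P).coeff
  have hexpand : ∀ u, P.eval (t + u) = ∑ k ∈ range (n + 1), e k * u ^ k := fun u => by
    rw [add_comm, ← taylor_eval,
      eval_eq_sum_range' (n := n + 1) (by rw [natDegree_taylor]; omega)]
  filter_upwards [eventually_bernsteinCoeff_mem_uIcc n e] with h hh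
  refine ⟨bernsteinCoeff n (fun k => e k * h ^ k), fun τ _ => ?_, fun j hj => ?_⟩
  · dsimp only
    rw [sum_bernsteinCoeff_mul_eval, add_sub_cancel_left, hexpand]
    simp_rw [mul_pow, mul_assoc]
  · dsimp only
    rw [hexpand, ← taylor_coeff_zero]
    exact hh j hj

lemma HasBernsteinCoeffsBetween.of_comp_neg {n : ℕ} {p : ℝ → ℝ} {c d : ℝ}
    (h : HasBernsteinCoeffsBetween n (fun x => p (-x)) (-d) (-c)) :
    HasBernsteinCoeffsBetween n p c d := by
  obtain ⟨β, hrep, hβ⟩ := h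
  refine ⟨fun j => β (n - j), fun τ hτ => ?_, fun j hj => ?_⟩
  · have hflip := hrep (1 - τ) ⟨by linarith [hτ.2], by linarith [hτ.1]⟩
    dsimp only at hflip
    rw [show -(-d + (-c - -d) * (1 - τ)) = c + (d - c) * τ by ring] at hflip
    rw [hflip, ← sum_range_reflect]
    refine sum_congr rfl fun j hj => ?_
    have hjn := Nat.lt_succ_iff.1 (mem_range.1 hj)
    rw [Nat.add_sub_cancel, ← bernsteinPolynomial.flip ℝ n j hjn, eval_comp]
    simp
  · simpa [Set.uIcc_comm] using hβ (n - j) (n.sub_le j)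

lemma eventually_hasBernsteinCoeffsBetween_left {n : ℕ} {P : ℝ[X]} (hP : P.natDegree ≤ n)
    (t : ℝ) :
    ∀ᶠ h in 𝓝[>] (0 : ℝ), HasBernsteinCoeffsBetween n (fun x => P.eval x) (t - h) t := by
  have hdeg : (P.comp (-X)).natDegree ≤ n := by simpa [natDegree_comp] using hP
  filter_upwards [eventually_hasBernsteinCoeffsBetween_right hdeg (-t)] with h hh
  refine HasBernsteinCoeffsBetween.of_comp_neg ?_
  rw [neg_sub, sub_eq_neg_add]
  simpa using hh

lemma HasBernsteinCoeffsBetween.exists_isLeast_isGreatest {n : ℕ} {p : ℝ → ℝ} {c d : ℝ}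
    (h : HasBernsteinCoeffsBetween n p c d) (hcd : c ≤ d)
    (hp : MonotoneOn p (Set.Icc c d) ∨ AntitoneOn p (Set.Icc c d)) :
    ∃ β : ℕ → ℝ,
      (∀ τ ∈ Set.Icc (0 : ℝ) 1,
        p (c + (d - c) * τ) =
          ∑ j ∈ range (n + 1), β j * ((n.choose j : ℝ) * τ ^ j * (1 - τ) ^ (n - j))) ∧
      IsLeast (p '' Set.Icc c d) ((range (n + 1)).inf' nonempty_range_add_one β) ∧
      IsGreatest (p '' Set.Icc c d) ((range (n + 1)).sup' nonempty_range_add_one β) := by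
  obtain ⟨β, hrep, hβ⟩ := h
  have hc : p c = β 0 := by simpa [bernsteinPolynomial.eval_at_0] using hrep 0 (by simp)
  have hd : p d = β n := by simpa [bernsteinPolynomial.eval_at_1] using hrep 1 (by simp)
  have hmem0 : 0 ∈ range (n + 1) := mem_range.2 n.succ_pos
  have hmemn : n ∈ range (n + 1) := self_mem_range_succ n
  have hinf : (range (n + 1)).inf' nonempty_range_add_one β = p c ⊓ p d :=
    le_antisymm (le_inf (hc ▸ inf'_le β hmem0) (hd ▸ inf'_le β hmemn))
      (le_inf' _ _ fun j hj => (hβ j (Nat.lt_succ_iff.1 (mem_range.1 hj))).1)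
  have hsup : (range (n + 1)).sup' nonempty_range_add_one β = p c ⊔ p d :=
    le_antisymm (sup'_le _ _ fun j hj => (hβ j (Nat.lt_succ_iff.1 (mem_range.1 hj))).2)
      (sup_le (hc ▸ le_sup' β hmem0) (hd ▸ le_sup' β hmemn))
  obtain ⟨hleast, hgreatest⟩ := isLeast_isGreatest_image_Icc hcd hp
  exact ⟨β, fun τ hτ => by simpa [bernsteinPolynomial] using hrep τ hτ, hinf ▸ hleast,
    hsup ▸ hgreatest⟩

def HasSubdivision (G : ℝ → ℝ → Prop) (a b : ℝ) : Prop :=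
  ∃ m : ℕ, ∃ s : ℕ → ℝ, s 0 = a ∧ s m = b ∧ (∀ i < m, s i < s (i + 1)) ∧
    ∀ i < m, G (s i) (s (i + 1))

lemma HasSubdivision.refl (G : ℝ → ℝ → Prop) (a : ℝ) : HasSubdivision G a a :=
  ⟨0, fun _ => a, rfl, rfl, by simp, by simp⟩

lemma HasSubdivision.snoc {G : ℝ → ℝ → Prop} {a x y : ℝ} (h : HasSubdivision G a x)
    (hxy : x < y) (hG : G x y) : HasSubdivision G a y := by
  obtain ⟨m, s, hs0, hsm, hlt, hG'⟩ := h
  refine ⟨m + 1, fun i => if i ≤ m then s i else y, by simp [hs0], by simp,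
    fun i hi => ?_, fun i hi => ?_⟩
  · obtain hi | rfl := (Nat.lt_succ_iff.1 hi).lt_or_eq
    · simpa [hi.le, Nat.succ_le_of_lt hi] using hlt i hi
    · simpa [hsm] using hxy
  · obtain hi | rfl := (Nat.lt_succ_iff.1 hi).lt_or_eq
    · simpa [hi.le, Nat.succ_le_of_lt hi] using hG' i hi
    · simpa [hsm] using hG

lemma hasSubdivision_of_eventually {G : ℝ → ℝ → Prop} {a b : ℝ} (hab : a ≤ b)
    (hG : ∀ t ∈ Set.Icc a b, ∀ᶠ h in 𝓝[>] (0 : ℝ), G (t - h) t ∧ G t (t + h)) :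
    HasSubdivision G a b := by
  set S := {x ∈ Set.Icc a b | HasSubdivision G a x}
  have haS : a ∈ S := ⟨Set.left_mem_Icc.2 hab, .refl G a⟩
  have hbdd : BddAbove S := ⟨b, fun x hx => hx.1.2⟩
  set u := sSup S with hu_def
  have hu : u ∈ Set.Icc a b := ⟨le_csSup hbdd haS, csSup_le ⟨a, haS⟩ fun x hx => hx.1.2⟩
  obtain ⟨ε, hε, hεG⟩ := mem_nhdsGT_iff_exists_Ioc_subset.1 (hG u hu)
  have huS : HasSubdivision G a u := by
    obtain ⟨x, hxS, hx⟩ := exists_lt_of_lt_csSup ⟨a, haS⟩ (sub_lt_self u hε)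
    obtain hxu | hxu := (le_csSup hbdd hxS).lt_or_eq
    · have hGxu := (hεG ⟨sub_pos.2 hxu, by linarith⟩).1
      rw [sub_sub_cancel] at hGxu
      exact hxS.2.snoc hxu hGxu
    · rw [hu_def, ← hxu]
      exact hxS.2
  obtain hub | hub := hu.2.eq_or_lt
  · exact hub ▸ huS
  set y := min b (u + ε)
  have huy : u < y := lt_min hub (lt_add_of_pos_right u hε)
  have hGuy := (hεG ⟨sub_pos.2 huy, by linarith [min_le_right b (u + ε)]⟩).2
  rw [add_sub_cancel] at hGuy
  have hyS : y ∈ S := ⟨⟨hu.1.trans huy.le, min_le_left _ _⟩, huS.snoc huy hGuy⟩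
  exact absurd (le_csSup hbdd hyS) (not_le.2 huy)

theorem exists_finite_partition_tight_bounds (n : ℕ) (a b : ℝ) (hab : a < b)
    (p : ℝ → ℝ) (α : ℕ → ℝ)
    (hp : ∀ t : ℝ, p t = ∑ k ∈ Finset.range (n + 1), α k * t ^ k)
    (hmono : MonotoneOn p (Set.Icc a b) ∨ AntitoneOn p (Set.Icc a b)) :
    ∃ m : ℕ, 0 < m ∧ ∃ s : ℕ → ℝ,
      s 0 = a ∧ s m = b ∧ (∀ i < m, s i < s (i + 1)) ∧
      ∀ i < m, ∃ β : ℕ → ℝ,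
        (∀ t ∈ Set.Icc (0 : ℝ) 1,
          p (s i + (s (i + 1) - s i) * t) =
            ∑ j ∈ Finset.range (n + 1),
              β j * ((n.choose j : ℝ) * t ^ j * (1 - t) ^ (n - j))) ∧
        IsLeast (p '' Set.Icc (s i) (s (i + 1)))
          ((Finset.range (n + 1)).inf' ⟨0, Finset.mem_range.mpr (Nat.succ_pos n)⟩ β) ∧
        IsGreatest (p '' Set.Icc (s i) (s (i + 1)))
          ((Finset.range (n + 1)).sup' ⟨0, Finset.mem_range.mpr (Nat.succ_pos n)⟩ β) := by
  set P : ℝ[X] := ∑ k ∈ range (n + 1), C (α k) * X ^ k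
  have hP : P.natDegree ≤ n := natDegree_sum_le_of_forall_le _ _ fun k hk =>
    (natDegree_C_mul_X_pow_le _ _).trans (Nat.lt_succ_iff.1 (mem_range.1 hk))
  obtain rfl : p = fun x => P.eval x := funext fun x => by simp [P, hp, eval_finsetSum]
  obtain ⟨m, s, hs0, hsm, hlt, hG⟩ := hasSubdivision_of_eventually hab.le fun t _ =>
    (eventually_hasBernsteinCoeffsBetween_left hP t).and
      (eventually_hasBernsteinCoeffsBetween_right hP t)
  have hm : 0 < m := Nat.pos_of_ne_zero fun hm => hab.ne (by rw [← hs0, ← hsm, hm])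
  have hs : StrictMonoOn s (Set.Iic m) := strictMonoOn_Iic_of_lt_succ fun i hi => hlt i hi
  refine ⟨m, hm, s, hs0, hsm, hlt, fun i hi =>
    (hG i hi).exists_isLeast_isGreatest (hlt i hi).le ?_⟩
  have hsub : Set.Icc (s i) (s (i + 1)) ⊆ Set.Icc a b :=
    Set.Icc_subset_Icc
      (hs0 ▸ hs.monotoneOn (Set.mem_Iic.2 m.zero_le) (Set.mem_Iic.2 hi.le) i.zero_le)
      (hsm ▸ hs.monotoneOn (Set.mem_Iic.2 hi) Set.self_mem_Iic hi)
  exact hmono.imp (·.mono hsub) (·.mono hsub)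
end
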